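/- For every c > 0 there exists ε > 0, depending only on c, such that for every finite tree G in which every vertex has degree d(v,G) < 1 + c, one has sr(K_G) ≤ 1/√(1+c) − ε. In particular, sr(K_G) does not approach 1/√(1+c) along any sequence of such bounded-degree trees, even as |G| → ∞. -/

import Mathlib

/-!
Root the tree at `r` and weight each vertex `v` by `t ^ dist r v`. A vertex has at most one
neighbour closer to `r`, so `K_G` maps this weight to at most `(t⁻¹ + (n - 1) t) / (c + n)` times
itself at a vertex of degree `n`, and a positive vector with `A P ≤ ρ P` bounds the spectral
radius of a nonnegative matrix `A` by `ρ`. At `t = 1 / √(1 + c)` that quotient equals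
`1 / √(1 + c)` for every `n`; increasing `t` slightly lowers it uniformly for `0 ≤ n ≤ 1 + c`.
-/

/-- `K_G = D⁻¹ A_G` where `D` is the diagonal matrix with entries `c + d(u,G)`. -/
noncomputable def Kg {V : Type} [Fintype V] [DecidableEq V] (c : ℝ)
    (G : SimpleGraph V) [DecidableRel G.Adj] : Matrix V V ℝ :=
  Matrix.of fun u v => (G.adjMatrix ℝ) u v / (c + (G.degree u : ℝ))

/-- The spectral radius of a real matrix: the largest modulus of a (complex) eigenvalue. -/
noncomputable def sr {V : Type} [Fintype V] [DecidableEq V] (A : Matrix V V ℝ) : ℝ :=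
  sSup ((fun z : ℂ => ‖z‖) '' spectrum ℂ (A.map Complex.ofReal))

open SimpleGraph Finset Matrix

section CollatzWielandt

variable {V : Type} [Fintype V] {A : Matrix V V ℝ} {P : V → ℝ} {ρ : ℝ}

theorem norm_le_of_mulVec_eq_smul_of_mulVec_le (hA : ∀ u v, 0 ≤ A u v) (hP : ∀ v, 0 < P v)
    (hAP : ∀ u, (A *ᵥ P) u ≤ ρ * P u) {z : ℂ} {x : V → ℂ} (hx : x ≠ 0)
    (hxz : A.map Complex.ofReal *ᵥ x = z • x) : ‖z‖ ≤ ρ := by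
  obtain ⟨v₀, hv₀⟩ := Function.ne_iff.mp hx
  have : Nonempty V := ⟨v₀⟩
  obtain ⟨u, hu⟩ := Finite.exists_max fun v => ‖x v‖ / P v
  have hxu : 0 < ‖x u‖ := by
    have := (div_pos (norm_pos_iff.mpr hv₀) (hP v₀)).trans_le (hu v₀)
    exact (div_pos_iff_of_pos_right (hP u)).mp this
  have hxv : ∀ v, ‖x v‖ ≤ ‖x u‖ / P u * P v := fun v => (div_le_iff₀ (hP v)).mp (hu v)
  refine le_of_mul_le_mul_right ?_ hxu
  calc ‖z‖ * ‖x u‖ = ‖∑ v, (A u v : ℂ) * x v‖ := by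
        rw [← norm_mul, ← smul_eq_mul, ← Pi.smul_apply, ← hxz]; rfl
    _ ≤ ∑ v, A u v * ‖x v‖ := by
        refine (norm_sum_le _ _).trans_eq (sum_congr rfl fun v _ => ?_)
        rw [norm_mul, Complex.norm_real, Real.norm_of_nonneg (hA u v)]
    _ ≤ ∑ v, A u v * (‖x u‖ / P u * P v) :=
        sum_le_sum fun v _ => mul_le_mul_of_nonneg_left (hxv v) (hA u v)
    _ = ‖x u‖ / P u * (A *ᵥ P) u := by
        simp only [mulVec, dotProduct, mul_sum]; exact sum_congr rfl fun v _ => by ring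
    _ ≤ ‖x u‖ / P u * (ρ * P u) :=
        mul_le_mul_of_nonneg_left (hAP u) (div_nonneg (norm_nonneg _) (hP u).le)
    _ = ρ * ‖x u‖ := by field_simp [(hP u).ne']

theorem sr_le_of_mulVec_le [DecidableEq V] (hA : ∀ u v, 0 ≤ A u v) (hP : ∀ v, 0 < P v)
    (hρ : 0 ≤ ρ) (hAP : ∀ u, (A *ᵥ P) u ≤ ρ * P u) : sr A ≤ ρ := by
  refine Real.sSup_le ?_ hρ
  rintro _ ⟨z, hz, rfl⟩
  rw [← spectrum_toLin', ← Module.End.hasEigenvalue_iff_mem_spectrum] at hz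
  obtain ⟨x, hx⟩ := hz.exists_hasEigenvector
  exact norm_le_of_mulVec_eq_smul_of_mulVec_le hA hP hAP hx.2
    (toLin'_apply _ x ▸ hx.apply_eq_smul)

end CollatzWielandt

namespace SimpleGraph

variable {V : Type} {G : SimpleGraph V}

theorem IsAcyclic.eq_of_adj_of_dist_add_one_eq (hG : G.IsAcyclic) {r u w₁ w₂ : V}
    (h₁ : G.Adj w₁ u) (h₂ : G.Adj w₂ u) (hd₁ : G.dist r w₁ + 1 = G.dist r u)
    (hd₂ : G.dist r w₂ + 1 = G.dist r u) : w₁ = w₂ := by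
  have hr : G.Reachable r u := Reachable.of_dist_ne_zero (by omega)
  have parent_eq_penultimate : ∀ w, G.Adj w u → G.dist r w + 1 = G.dist r u →
      ∃ p : G.Path r u, p.1.penultimate = w := by
    intro w hw hd
    obtain ⟨q, hq⟩ := (hr.trans hw.symm.reachable).exists_walk_length_eq_dist
    exact ⟨⟨q.concat hw, (q.concat hw).isPath_of_length_eq_dist (by simp [hq, hd])⟩,
      q.penultimate_concat hw⟩
  obtain ⟨p₁, rfl⟩ := parent_eq_penultimate w₁ h₁ hd₁
  obtain ⟨p₂, rfl⟩ := parent_eq_penultimate w₂ h₂ hd₂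
  rw [(hG.subsingleton_path r u).elim p₁ p₂]

theorem IsTree.sum_pow_dist_le [Fintype V] [DecidableRel G.Adj] (hG : G.IsTree) (r u : V)
    {t : ℝ} (ht₀ : 0 < t) (ht₁ : t ≤ 1) :
    ∑ v ∈ G.neighborFinset u, t ^ G.dist r v
      ≤ t ^ G.dist r u * (t⁻¹ + (G.degree u - 1) * t) := by
  classical
  set d := G.dist r u
  have hterm : ∀ v ∈ G.neighborFinset u, t ^ G.dist r v
      = t ^ d * t + if G.dist r v + 1 = d then t ^ d * (t⁻¹ - t) else 0 := by
    intro v hv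
    rcases hG.dist_eq_dist_add_one_of_adj r ((mem_neighborFinset G u v).mp hv) with h | h
    · rw [if_pos h.symm, show d = G.dist r v + 1 from h, pow_succ]; field_simp; ring
    · rw [if_neg (by omega), h, pow_succ, add_zero]
  have hparent : #{v ∈ G.neighborFinset u | G.dist r v + 1 = d} ≤ 1 := by
    refine card_le_one.mpr fun w₁ hw₁ w₂ hw₂ => ?_
    simp only [mem_filter, mem_neighborFinset] at hw₁ hw₂
    exact hG.isAcyclic.eq_of_adj_of_dist_add_one_eq hw₁.1.symm hw₂.1.symm hw₁.2 hw₂.2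
  have hgap : 0 ≤ t ^ d * (t⁻¹ - t) :=
    mul_nonneg (by positivity) (sub_nonneg.mpr (ht₁.trans (one_le_inv₀ ht₀ |>.mpr ht₁)))
  rw [sum_congr rfl hterm, sum_add_distrib, sum_const, ← sum_filter, sum_const,
    card_neighborFinset_eq_degree, nsmul_eq_mul, nsmul_eq_mul]
  have : (#{v ∈ G.neighborFinset u | G.dist r v + 1 = d} : ℝ) ≤ 1 := by exact_mod_cast hparent
  nlinarith

end SimpleGraph

section Kg

variable {V : Type} [Fintype V] [DecidableEq V] {c : ℝ} {G : SimpleGraph V} [DecidableRel G.Adj]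

theorem Kg_nonneg (hc : 0 ≤ c) (u v : V) : 0 ≤ Kg c G u v :=
  div_nonneg (by rw [adjMatrix_apply]; split_ifs <;> norm_num) (by positivity)

theorem Kg_mulVec_apply (P : V → ℝ) (u : V) :
    (Kg c G *ᵥ P) u = (∑ v ∈ G.neighborFinset u, P v) / (c + G.degree u) := by
  rw [← adjMatrix_mulVec_apply, mulVec, dotProduct, mulVec, dotProduct, sum_div]
  exact sum_congr rfl fun v _ => by simp only [Kg, of_apply]; ring

end Kg

theorem exists_forall_inv_add_sub_one_mul_le {c : ℝ} (hc : 0 < c) :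
    ∃ t ρ : ℝ, 0 < t ∧ t ≤ 1 ∧ 0 ≤ ρ ∧ ρ < 1 / √(1 + c) ∧
      ∀ n : ℝ, 0 ≤ n → n ≤ 1 + c → t⁻¹ + (n - 1) * t ≤ ρ * (c + n) := by
  set s := √(1 + c)
  have hs : s ^ 2 = 1 + c := Real.sq_sqrt (by positivity)
  have hs₁ : 1 < s := by rw [Real.lt_sqrt zero_le_one]; linarith
  have hcs : c / s < s := by rw [div_lt_iff₀ (by positivity)]; nlinarith
  -- With `t = g⁻¹`, the conditions at `n = 0` and `n = 1 + c` factor as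
  -- `(g - s) (s g + 1) < 0` and `(g - s) (s g - c) < 0`.
  obtain ⟨g, hg, hgs⟩ := exists_between (max_lt hs₁ hcs)
  rw [max_lt_iff, div_lt_iff₀ (by positivity)] at hg
  obtain ⟨hg₁, hgc⟩ := hg
  have hg₀ : 0 < g := by linarith
  have hg_inv : g⁻¹ < g := (inv_lt_one_of_one_lt₀ hg₁).trans hg₁
  set ρ := max ((g - g⁻¹) / c) ((g + c * g⁻¹) / (2 * c + 1))
  have h₀ : g - g⁻¹ ≤ ρ * c := (div_le_iff₀ hc).mp (le_max_left _ _)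
  have h₁ : g + c * g⁻¹ ≤ ρ * (2 * c + 1) :=
    (div_le_iff₀ (by positivity)).mp (le_max_right _ _)
  refine ⟨g⁻¹, ρ, inv_pos.mpr hg₀, inv_le_one_of_one_le₀ hg₁.le, ?_, max_lt ?_ ?_, ?_⟩
  · exact le_max_of_le_left (div_nonneg (sub_nonneg.mpr hg_inv.le) hc.le)
  · rw [div_lt_div_iff₀ hc (by positivity)]
    field_simp
    nlinarith [mul_pos (sub_pos.mpr hgs) (by positivity : 0 < s * g + 1)]
  · rw [div_lt_div_iff₀ (by positivity) (by positivity)]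
    field_simp
    nlinarith [mul_pos (sub_pos.mpr hgs) (sub_pos.mpr hgc)]
  · intro n hn₀ hn₁
    rw [inv_inv]
    have key : (1 + c) * (g + (n - 1) * g⁻¹ - ρ * (c + n))
        = (1 + c - n) * (g - g⁻¹ - ρ * c) + n * (g + c * g⁻¹ - ρ * (2 * c + 1)) := by ring
    nlinarith [mul_nonneg (sub_nonneg.mpr hn₁) (sub_nonneg.mpr h₀),
      mul_nonneg hn₀ (sub_nonneg.mpr h₁)]

/-- for every c > 0 there is ε > 0 (depending only on c) such that
for every finite tree G all of whose vertex degrees are < 1 + c,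
sr(K_G) ≤ 1/√(1+c) − ε. -/
theorem bounded_degree_trees_spectral_radius_uniformly_below
    (c : ℝ) (hc : 0 < c) :
    ∃ ε : ℝ, 0 < ε ∧
      ∀ (V : Type) [Fintype V] [DecidableEq V] (G : SimpleGraph V) [DecidableRel G.Adj],
        G.IsTree → (∀ v : V, (G.degree v : ℝ) < 1 + c) →
        sr (Kg c G) ≤ 1 / Real.sqrt (1 + c) - ε := by
  obtain ⟨t, ρ, ht₀, ht₁, hρ₀, hρ, hbound⟩ := exists_forall_inv_add_sub_one_mul_le hc
  refine ⟨1 / √(1 + c) - ρ, sub_pos.mpr hρ, fun V _ _ G _ hG hdeg => ?_⟩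
  obtain ⟨r⟩ := hG.connected.nonempty
  rw [sub_sub_cancel]
  refine sr_le_of_mulVec_le (Kg_nonneg hc.le) (fun v => pow_pos ht₀ (G.dist r v)) hρ₀
    fun u => ?_
  rw [Kg_mulVec_apply, div_le_iff₀ (by positivity)]
  calc ∑ v ∈ G.neighborFinset u, t ^ G.dist r v
      ≤ t ^ G.dist r u * (t⁻¹ + (G.degree u - 1) * t) := hG.sum_pow_dist_le r u ht₀ ht₁
    _ ≤ t ^ G.dist r u * (ρ * (c + G.degree u)) :=
        mul_le_mul_of_nonneg_left (hbound _ (Nat.cast_nonneg _) (hdeg u).le) (by positivity)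
    _ = ρ * t ^ G.dist r u * (c + G.degree u) := by ring
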